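/- arXiv:2011.02169 — 6 statements merged into one kernel-verified Lean document; each statement's English description precedes it below -/
import Mathlib

section
/- Let u, v : [0,∞) → ℝ be C¹ solutions of u' = −(γ+β)u + βu((n−1)v/n + u/n) and v' = −β((n−2)/n)uv, with γ, β > 0, n > 2, and suppose u(t) ≥ 0, v(t) ≥ 0, u(t)+v(t) ≤ n for all t ≥ 0. Then (u+v)'(t) = −γu(t) − βu(t)(1 − (u(t)+v(t))/n) ≤ 0 for all t, and ∫₀^∞ u(t) dt < ∞; in particular u(t) → 0 as t → ∞. -/
/-!
Along the flow, `(u + v)' = -γu - βu(1 - (u + v)/n) ≤ -γu`, so `γ ∫ u` is bounded by the total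
decrease of `u + v`, which is finite because `u + v ≥ 0`. Both `u + v` and `v` are nonincreasing
and nonnegative, hence converge, so `u` has a limit at infinity; an integrable function can only
tend to `0`.
-/

open Set Filter Topology MeasureTheory

theorem AntitoneOn.exists_tendsto_atTop {α β : Type*} [LinearOrder α]
    [ConditionallyCompleteLinearOrder β] [TopologicalSpace β] [OrderTopology β]
    {f : α → β} {a : α} (hf : AntitoneOn f (Ici a)) (hbdd : BddBelow (f '' Ici a)) :
    ∃ l, Tendsto f atTop (𝓝 l) := by
  have hmax : ∀ x, max x a ∈ Ici a := fun x => le_max_right x a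
  have hanti : Antitone fun x => f (max x a) := fun x y hxy =>
    hf (hmax x) (hmax y) (max_le_max hxy le_rfl)
  have hbdd' : BddBelow (range fun x => f (max x a)) :=
    hbdd.mono (range_subset_iff.2 fun x => mem_image_of_mem f (hmax x))
  refine ⟨_, (tendsto_atTop_ciInf hanti hbdd').congr' ?_⟩
  filter_upwards [eventually_ge_atTop a] with x hx
  rw [max_eq_left hx]

theorem exists_tendsto_atTop_of_hasDerivAt_nonpos {g g' : ℝ → ℝ} {a m : ℝ}
    (hderiv : ∀ x ∈ Ici a, HasDerivAt g (g' x) x) (hg' : ∀ x ∈ Ici a, g' x ≤ 0)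
    (hbdd : ∀ x ∈ Ici a, m ≤ g x) :
    ∃ l, Tendsto g atTop (𝓝 l) := by
  have hanti : AntitoneOn g (Ici a) := by
    refine antitoneOn_of_hasDerivWithinAt_nonpos (convex_Ici a)
      (fun x hx => (hderiv x hx).continuousAt.continuousWithinAt) (fun x hx => ?_)
      (fun x hx => hg' x (interior_subset hx))
    exact (hderiv x (interior_subset hx)).hasDerivWithinAt
  exact hanti.exists_tendsto_atTop ⟨m, forall_mem_image.2 hbdd⟩

theorem eq_zero_of_integrableOn_Ioi_of_tendsto {E : Type*} [NormedAddCommGroup E]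
    {f : ℝ → E} {a : ℝ} {c : E} (hf : IntegrableOn f (Ioi a)) (hc : Tendsto f atTop (𝓝 c)) :
    c = 0 := by
  by_contra hne
  have hpos : 0 < ‖c‖ / 2 := by positivity
  obtain ⟨T, hT⟩ := (eventually_ge_atTop a).and
    (hc.norm.eventually (eventually_ge_nhds (half_lt_self (norm_pos_iff.2 hne))))
    |>.exists_forall_of_atTop
  have hconst : IntegrableOn (fun _ => ‖c‖ / 2) (Ioi T) := by
    refine Integrable.mono (hf.mono_set (Ioi_subset_Ioi (hT T le_rfl).1))
      aestronglyMeasurable_const ?_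
    filter_upwards [ae_restrict_mem measurableSet_Ioi] with x hx
    rw [Real.norm_of_nonneg hpos.le]
    exact (hT x hx.le).2
  rw [integrableOn_const_iff] at hconst
  simp [hpos.ne'] at hconst

theorem integrableOn_Ioi_of_mul_le_neg_deriv {f g g' : ℝ → ℝ} {a γ l : ℝ} (hγ : 0 < γ)
    (hf : ContinuousOn f (Ioi a)) (hf0 : ∀ x ∈ Ici a, 0 ≤ f x)
    (hderiv : ∀ x ∈ Ici a, HasDerivAt g (g' x) x) (hle : ∀ x ∈ Ici a, γ * f x ≤ -g' x)
    (hg : Tendsto g atTop (𝓝 l)) :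
    IntegrableOn f (Ioi a) := by
  have hg'_nonpos : ∀ x ∈ Ioi a, g' x ≤ 0 := fun x hx => by
    nlinarith [hle x (mem_Ici_of_Ioi hx), hf0 x (mem_Ici_of_Ioi hx)]
  have hg'_int : IntegrableOn g' (Ioi a) := integrableOn_Ioi_deriv_of_nonpos' hderiv hg'_nonpos hg
  refine Integrable.mono' (hg'_int.neg.div_const γ) (hf.aestronglyMeasurable measurableSet_Ioi) ?_
  filter_upwards [ae_restrict_mem measurableSet_Ioi] with x hx
  rw [Real.norm_of_nonneg (hf0 x (mem_Ici_of_Ioi hx)), le_div_iff₀ hγ, mul_comm]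
  exact hle x (mem_Ici_of_Ioi hx)

/-- Fast-limit auxiliary variables u = [SI]/[S], v = [SS]/[S]: u+v decreases,
u is integrable on [0,∞), and u → 0. -/
theorem fast_limit_u_integrable (β γ n : ℝ) (hβ : 0 < β) (hγ : 0 < γ) (hn : 2 < n)
    (u v : ℝ → ℝ)
    (hu : ∀ t ≥ (0:ℝ), HasDerivAt u (-(γ + β) * u t + β * u t * ((n - 1) * v t / n + u t / n)) t)
    (hv : ∀ t ≥ (0:ℝ), HasDerivAt v (-β * ((n - 2) / n) * u t * v t) t)
    (hu0 : ∀ t ≥ (0:ℝ), 0 ≤ u t) (hv0 : ∀ t ≥ (0:ℝ), 0 ≤ v t)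
    (hsum : ∀ t ≥ (0:ℝ), u t + v t ≤ n) :
    (∀ t ≥ (0:ℝ), HasDerivAt (fun s => u s + v s)
        (-γ * u t - β * u t * (1 - (u t + v t) / n)) t ∧
      -γ * u t - β * u t * (1 - (u t + v t) / n) ≤ 0) ∧
    MeasureTheory.IntegrableOn u (Ici (0:ℝ)) ∧
    Tendsto u atTop (nhds 0) := by
  have hsum_deriv : ∀ t ≥ (0:ℝ), HasDerivAt (fun s => u s + v s)
      (-γ * u t - β * u t * (1 - (u t + v t) / n)) t := fun t ht =>
    ((hu t ht).add (hv t ht)).congr_deriv (by ring)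
  have hrate : ∀ t ≥ (0:ℝ), γ * u t ≤ -(-γ * u t - β * u t * (1 - (u t + v t) / n)) := by
    intro t ht
    have hfrac : (u t + v t) / n ≤ 1 := (div_le_one (by linarith)).2 (hsum t ht)
    nlinarith [mul_nonneg hβ.le (hu0 t ht)]
  have hsum_rate : ∀ t ≥ (0:ℝ), -γ * u t - β * u t * (1 - (u t + v t) / n) ≤ 0 := fun t ht => by
    nlinarith [hrate t ht, hu0 t ht]
  have hv_rate : ∀ t ≥ (0:ℝ), -β * ((n - 2) / n) * u t * v t ≤ 0 := by
    intro t ht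
    have hfrac : 0 ≤ (n - 2) / n := div_nonneg (by linarith) (by linarith)
    nlinarith [mul_nonneg (mul_nonneg hβ.le (hu0 t ht)) (hv0 t ht)]
  obtain ⟨lw, hlw⟩ := exists_tendsto_atTop_of_hasDerivAt_nonpos hsum_deriv hsum_rate
    (fun t ht => add_nonneg (hu0 t ht) (hv0 t ht))
  obtain ⟨lv, hlv⟩ := exists_tendsto_atTop_of_hasDerivAt_nonpos hv hv_rate hv0
  have hint : IntegrableOn u (Ioi 0) := integrableOn_Ioi_of_mul_le_neg_deriv hγ
    (fun t ht => (hu t (le_of_lt ht)).continuousAt.continuousWithinAt) hu0 hsum_deriv hrate hlw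
  have hlim : Tendsto u atTop (𝓝 (lw - lv)) := by simpa using hlw.sub hlv
  refine ⟨fun t ht => ⟨hsum_deriv t ht, hsum_rate t ht⟩,
    by rwa [integrableOn_Ici_iff_integrableOn_Ioi], ?_⟩
  rwa [eq_zero_of_integrableOn_Ioi_of_tendsto hint hlim] at hlim
end

section
/- Along solutions of the fast (layer) system [S]' = −β[SI], [SS]' = −2β((n−1)/n)[SS][SI]/[S] (with [S] > 0, [SS] > 0), the quantity V(t) = ln([SS](t)) − (2(n−1)/n)·ln([S](t)) is a constant of motion; equivalently [SS](t) = [SS](0)·([S](t)/[S](0))^{(2n−2)/n} for all t ≥ 0. -/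
open Real Set

/-
Along the flow, `(log SS)' = SS'/SS = c · S'/S = (c · log S)'` with `c = 2(n-1)/n`, so
`log SS - c log S` has zero derivative on `[0, ∞)` and is therefore constant there;
exponentiating gives `SS = SS₀ (S/S₀)^c`.
-/

theorem eq_of_hasDerivAt_zero_of_ge {φ : ℝ → ℝ} {a : ℝ} (hφ : ∀ x ≥ a, HasDerivAt φ 0 x) :
    ∀ t ≥ a, φ t = φ a := fun t ht =>
  constant_of_has_deriv_right_zero (fun x hx => (hφ x hx.1).continuousAt.continuousWithinAt)
    (fun x hx => (hφ x hx.1).hasDerivWithinAt) t ⟨ht, le_rfl⟩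

theorem log_sub_mul_log_eq_of_hasDerivAt {f g f' : ℝ → ℝ} {a c : ℝ}
    (hf0 : ∀ t ≥ a, f t ≠ 0) (hg0 : ∀ t ≥ a, g t ≠ 0)
    (hf : ∀ t ≥ a, HasDerivAt f (f' t) t)
    (hg : ∀ t ≥ a, HasDerivAt g (c * g t * f' t / f t) t) :
    ∀ t ≥ a, log (g t) - c * log (f t) = log (g a) - c * log (f a) := by
  refine eq_of_hasDerivAt_zero_of_ge (φ := fun t => log (g t) - c * log (f t)) fun x hx => ?_
  refine (((hg x hx).log (hg0 x hx)).sub (((hf x hx).log (hf0 x hx)).const_mul c)).congr_deriv ?_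
  field_simp [hf0 x hx, hg0 x hx]
  ring

theorem eq_mul_div_rpow_of_log_sub_mul_log_eq {x x₀ y y₀ c : ℝ}
    (hx : 0 < x) (hx₀ : 0 < x₀) (hy : 0 < y) (hy₀ : 0 < y₀)
    (h : log y - c * log x = log y₀ - c * log x₀) :
    y = y₀ * (x / x₀) ^ c := by
  have hq : 0 < x / x₀ := div_pos hx hx₀
  refine log_injOn_pos hy (mul_pos hy₀ (rpow_pos_of_pos hq c)) ?_
  rw [log_mul hy₀.ne' (rpow_pos_of_pos hq c).ne', log_rpow hq, log_div hx.ne' hx₀.ne']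
  linarith

theorem layer_constant_of_motion_general (β n : ℝ)
    (S SS SI : ℝ → ℝ)
    (hSpos : ∀ t ≥ (0:ℝ), 0 < S t) (hSSpos : ∀ t ≥ (0:ℝ), 0 < SS t)
    (hS : ∀ t ≥ (0:ℝ), HasDerivAt S (-β * SI t) t)
    (hSS : ∀ t ≥ (0:ℝ), HasDerivAt SS (-2 * β * ((n - 1) / n) * SS t * SI t / S t) t) :
    ∀ t ≥ (0:ℝ),
      Real.log (SS t) - (2 * (n - 1) / n) * Real.log (S t)
        = Real.log (SS 0) - (2 * (n - 1) / n) * Real.log (S 0) ∧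
      SS t = SS 0 * (S t / S 0) ^ ((2 * n - 2) / n) := by
  have hlog := log_sub_mul_log_eq_of_hasDerivAt (c := 2 * (n - 1) / n)
    (fun t ht => (hSpos t ht).ne') (fun t ht => (hSSpos t ht).ne') hS
    fun t ht => (hSS t ht).congr_deriv (by ring)
  intro t ht
  refine ⟨hlog t ht, ?_⟩
  rw [show (2 * n - 2) / n = 2 * (n - 1) / n by ring]
  exact eq_mul_div_rpow_of_log_sub_mul_log_eq (hSpos t ht) (hSpos 0 le_rfl) (hSSpos t ht)
    (hSSpos 0 le_rfl) (hlog t ht)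

/-- Constant of motion of the fast (layer) system: [SS] = [SS]₀ ([S]/[S]₀)^((2n−2)/n). -/
theorem layer_constant_of_motion (β n : ℝ) (hβ : 0 < β) (hn : 2 < n)
    (S SS SI : ℝ → ℝ) (hSI : Continuous SI)
    (hSpos : ∀ t ≥ (0:ℝ), 0 < S t) (hSSpos : ∀ t ≥ (0:ℝ), 0 < SS t)
    (hS : ∀ t ≥ (0:ℝ), HasDerivAt S (-β * SI t) t)
    (hSS : ∀ t ≥ (0:ℝ), HasDerivAt SS (-2 * β * ((n - 1) / n) * SS t * SI t / S t) t) :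
    ∀ t ≥ (0:ℝ),
      Real.log (SS t) - (2 * (n - 1) / n) * Real.log (S t)
        = Real.log (SS 0) - (2 * (n - 1) / n) * Real.log (S 0) ∧
      SS t = SS 0 * (S t / S 0) ^ ((2 * n - 2) / n) :=
  layer_constant_of_motion_general β n S SS SI hSpos hSSpos hS hSS
end

section
/- The Jacobian of the pairwise SIRS vector field (with ε = 0) at a point of the critical manifold C₀ = {[I]=[SI]=[II]=0} with [S] > 0 has eigenvalues 0 (double), −γ, −2γ, and λ₅ = β((n−1)/n)([SS]/[S]) − (γ+β); in particular λ₅ < 0 if and only if [SS] < L[S], where L = n(β+γ)/(β(n−1)). -/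
/-!
Every term of the field carries a factor `[I]`, `[SI]` or `[II]`, so on `C₀` only the
derivatives in those directions can be nonzero; those in the `[I]` and `[II]` directions appear
only on the diagonal. Hence the Jacobian is diagonal apart from its `[SI]` column, and a matrix
of that shape has determinant the product of its diagonal entries. The characteristic
polynomial is therefore `∏ (X - Jᵢᵢ)` with diagonal `(0, -γ, 0, λ₅, -2γ)`.
-/

open Polynomial

/-- The layer (ε = 0) pairwise SIRS vector field. Coordinates:
p 0 = [S], p 1 = [I], p 2 = [SS], p 3 = [SI], p 4 = [II]. -/
noncomputable def layerSIRS (β γ n : ℝ) (p : Fin 5 → ℝ) : Fin 5 → ℝ :=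
  ![-β * p 3,
    β * p 3 - γ * p 1,
    -2 * β * ((n - 1) / n) * p 2 * p 3 / p 0,
    -(γ + β) * p 3 + β * ((n - 1) / n) * p 3 * (p 2 - p 3) / p 0,
    2 * β * p 3 - 2 * γ * p 4 + 2 * β * ((n - 1) / n) * p 3 ^ 2 / p 0]

namespace Matrix

variable {ι R : Type*} [Fintype ι] [DecidableEq ι] [CommRing R]

theorem det_eq_prod_diag_of_offDiag_in_col (A : Matrix ι ι R) (j : ι)
    (hA : ∀ i k, i ≠ k → k ≠ j → A i k = 0) : A.det = ∏ i, A i i := by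
  rw [det_apply, Finset.sum_eq_single 1 _ (by simp)]
  · simp
  intro σ _ hσ
  -- if `j` is moved, then so is `σ j ≠ j`
  obtain ⟨i, hi, hij⟩ : ∃ i, σ i ≠ i ∧ i ≠ j := by
    obtain ⟨i, hi⟩ := not_forall.mp (mt Equiv.Perm.ext_iff.mpr hσ)
    by_cases hij : i = j
    · subst hij
      exact ⟨σ i, fun h => hi (σ.injective h), hi⟩
    · exact ⟨i, hi, hij⟩
  rw [Finset.prod_eq_zero (f := fun i => A (σ i) i) (Finset.mem_univ i) (hA _ _ hi hij),
    smul_zero]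

theorem charpoly_eq_prod_of_offDiag_in_col (A : Matrix ι ι R) (j : ι)
    (hA : ∀ i k, i ≠ k → k ≠ j → A i k = 0) : A.charpoly = ∏ i, (X - C (A i i)) := by
  rw [charpoly, det_eq_prod_diag_of_offDiag_in_col _ j]
  · simp [charmatrix_apply_eq]
  intro i k hik hkj
  rw [charmatrix_apply_ne _ _ _ hik, hA i k hik hkj, map_zero, neg_zero]

end Matrix

open ContinuousLinearMap in
theorem jacobian_layerSIRS_on_critical_manifold (β γ n S SS : ℝ) (hS : S ≠ 0) :
    (Matrix.of fun i j => fderiv ℝ (fun p : Fin 5 → ℝ => layerSIRS β γ n p i)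
        ![S, 0, SS, 0, 0] (Pi.single j 1)) =
      !![0, 0, 0, -β, 0;
         0, -γ, 0, β, 0;
         0, 0, 0, -2 * β * ((n - 1) / n) * (SS / S), 0;
         0, 0, 0, β * ((n - 1) / n) * (SS / S) - (γ + β), 0;
         0, 0, 0, 2 * β, -2 * γ] := by
  set x : Fin 5 → ℝ := ![S, 0, SS, 0, 0]
  set k := (n - 1) / n
  have hproj (i : Fin 5) :
      HasFDerivAt (fun p : Fin 5 → ℝ => p i) (proj i : (Fin 5 → ℝ) →L[ℝ] ℝ) x :=
    hasFDerivAt_apply i x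
  have hinv : HasFDerivAt (fun p : Fin 5 → ℝ => (p 0)⁻¹) _ x :=
    (hasFDerivAt_inv hS).comp x (hproj 0)
  -- each row of `layerSIRS` unfolds definitionally to its formula, with `a / b = a * b⁻¹`
  have hF0 : HasFDerivAt (fun p => layerSIRS β γ n p 0) _ x := (hproj 3).const_mul (-β)
  have hF1 : HasFDerivAt (fun p => layerSIRS β γ n p 1) _ x :=
    ((hproj 3).const_mul β).sub ((hproj 1).const_mul γ)
  have hF2 : HasFDerivAt (fun p => layerSIRS β γ n p 2) _ x :=
    ((((hproj 2).const_mul (-2 * β * k)).fun_mul (hproj 3))).fun_mul hinv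
  have hF3 : HasFDerivAt (fun p => layerSIRS β γ n p 3) _ x :=
    ((hproj 3).const_mul (-(γ + β))).fun_add
      ((((hproj 3).const_mul (β * k)).fun_mul ((hproj 2).fun_sub (hproj 3))).fun_mul hinv)
  have hF4 : HasFDerivAt (fun p => layerSIRS β γ n p 4) _ x :=
    (((hproj 3).const_mul (2 * β)).fun_sub ((hproj 4).const_mul (2 * γ))).fun_add
      ((((hproj 3).pow 2).const_mul (2 * β * k)).fun_mul hinv)
  ext i j
  fin_cases i <;> fin_cases j <;>
    simp [hF0.fderiv, hF1.fderiv, hF2.fderiv, hF3.fderiv, hF4.fderiv, x] <;> ring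

theorem jacobian_eigenvalues_on_critical_manifold_general (β γ n : ℝ)
    (hβ : 0 < β) (hn : 2 < n)
    (S SS : ℝ) (hS : 0 < S) :
    let x : Fin 5 → ℝ := ![S, 0, SS, 0, 0]
    let J : Matrix (Fin 5) (Fin 5) ℝ :=
      Matrix.of fun i j => fderiv ℝ (fun p : Fin 5 → ℝ => layerSIRS β γ n p i) x (Pi.single j 1)
    let lam5 : ℝ := β * ((n - 1) / n) * (SS / S) - (γ + β)
    J.charpoly = X ^ 2 * (X + C γ) * (X + C (2 * γ)) * (X - C lam5) ∧
      (lam5 < 0 ↔ SS < (n * (β + γ) / (β * (n - 1))) * S) := by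
  intro x J lam5
  have hJ : J = _ := jacobian_layerSIRS_on_critical_manifold β γ n S SS hS.ne'
  constructor
  · rw [hJ, Matrix.charpoly_eq_prod_of_offDiag_in_col _ 3]
    · simp [Fin.prod_univ_five, lam5]
      ring
    · intro i k hik hk
      fin_cases i <;> fin_cases k <;> simp_all
  · have hcoef : 0 < β * ((n - 1) / n) := by
      have : 0 < n - 1 := by linarith
      positivity
    have hL : (γ + β) / (β * ((n - 1) / n)) = n * (β + γ) / (β * (n - 1)) := by
      field_simp
      ring
    rw [sub_neg, ← lt_div_iff₀' hcoef, div_lt_iff₀ hS, hL]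

/-- At a point of the critical manifold C₀ = {[I]=[SI]=[II]=0} with [S] > 0, the Jacobian of
the layer vector field has characteristic polynomial X²(X+γ)(X+2γ)(X−λ₅), i.e. eigenvalues
0 (double), −γ, −2γ and λ₅ = β((n−1)/n)[SS]/[S] − (γ+β); and λ₅ < 0 ↔ [SS] < L[S]. -/
theorem jacobian_eigenvalues_on_critical_manifold (β γ n : ℝ)
    (hβ : 0 < β) (hγ : 0 < γ) (hn : 2 < n)
    (S SS : ℝ) (hS : 0 < S) (hSS : 0 ≤ SS) :
    let x : Fin 5 → ℝ := ![S, 0, SS, 0, 0]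
    let J : Matrix (Fin 5) (Fin 5) ℝ :=
      Matrix.of fun i j => fderiv ℝ (fun p : Fin 5 → ℝ => layerSIRS β γ n p i) x (Pi.single j 1)
    let lam5 : ℝ := β * ((n - 1) / n) * (SS / S) - (γ + β)
    J.charpoly = X ^ 2 * (X + C γ) * (X + C (2 * γ)) * (X - C lam5) ∧
      (lam5 < 0 ↔ SS < (n * (β + γ) / (β * (n - 1))) * S) :=
  jacobian_eigenvalues_on_critical_manifold_general β γ n hβ hn S SS hS
end

section
/- Along the slow flow d[S]/dτ = 1 − [S], d[SS]/dτ = 2(n[S] − [SS]), the distance to the parabola Γ = {[SS] = n[S]²} decays exactly exponentially: d(τ) := |[SS](τ) − n[S](τ)²| satisfies d(τ) = e^{−2τ} d(0) for all τ ≥ 0. In particular the parabola Γ is invariant and uniformly exponentially attracting. -/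
open Real

/-! The quantity `SS - n S²` obeys the linear equation `d' = -2 d`: the `2 n S` terms coming from
`SS'` and from `(n S²)' = 2 n S (1 - S)` cancel, leaving `-2 (SS - n S²)`. -/

theorem eq_exp_mul_of_hasDerivAt_const_mul {g : ℝ → ℝ} {c : ℝ}
    (hg : ∀ t, HasDerivAt g (c * g t) t) (t : ℝ) : g t = exp (c * t) * g 0 := by
  have hconst : ∀ s, HasDerivAt (fun s => exp (-(c * s)) * g s) 0 s := by
    intro s
    have hexp : HasDerivAt (fun s => exp (-(c * s))) (exp (-(c * s)) * -c) s := by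
      simpa using ((hasDerivAt_id s).const_mul c).neg.exp
    exact (hexp.mul (hg s)).congr_deriv (by ring)
  have key := is_const_of_deriv_eq_zero (fun s => (hconst s).differentiableAt)
    (fun s => (hconst s).deriv) t 0
  simp only [mul_zero, neg_zero, exp_zero, one_mul] at key
  rw [← key, ← mul_assoc, ← exp_add, add_neg_cancel, exp_zero, one_mul]

theorem hasDerivAt_sub_mul_sq {n : ℝ} {S SS : ℝ → ℝ}
    (hS : ∀ τ, HasDerivAt S (1 - S τ) τ)
    (hSS : ∀ τ, HasDerivAt SS (2 * (n * S τ - SS τ)) τ) (τ : ℝ) :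
    HasDerivAt (fun τ => SS τ - n * S τ ^ 2) (-2 * (SS τ - n * S τ ^ 2)) τ := by
  have h := (hSS τ).sub (((hS τ).pow 2).const_mul n)
  exact h.congr_deriv (by push_cast; ring)

theorem parabola_uniformly_attracting_general (n : ℝ)
    (S SS : ℝ → ℝ)
    (hS : ∀ τ, HasDerivAt S (1 - S τ) τ)
    (hSS : ∀ τ, HasDerivAt SS (2 * (n * S τ - SS τ)) τ) :
    ∀ τ ≥ (0:ℝ), |SS τ - n * (S τ) ^ 2| = exp (-2 * τ) * |SS 0 - n * (S 0) ^ 2| := by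
  intro τ _
  rw [eq_exp_mul_of_hasDerivAt_const_mul (hasDerivAt_sub_mul_sq hS hSS) τ, abs_mul,
    abs_of_pos (exp_pos _)]

/-- The distance to the parabola Γ = {[SS] = n[S]²} decays exactly like e^{−2τ} along the
slow flow; in particular Γ is invariant and uniformly exponentially attracting. -/
theorem parabola_uniformly_attracting (n : ℝ) (hn : 2 < n)
    (S SS : ℝ → ℝ)
    (hS : ∀ τ, HasDerivAt S (1 - S τ) τ)
    (hSS : ∀ τ, HasDerivAt SS (2 * (n * S τ - SS τ)) τ)
    (hinit : S 0 ∈ Set.Ioo (0:ℝ) 1 ∧ SS 0 ∈ Set.Ioo (0:ℝ) n) :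
    ∀ τ ≥ (0:ℝ), |SS τ - n * (S τ) ^ 2| = exp (-2 * τ) * |SS 0 - n * (S 0) ^ 2| :=
  parabola_uniformly_attracting_general n S SS hS hSS
end

section
/- The region D = {([S],[SS]) ∈ (0,1)×(0,n) : [SS] < α([S])} with α(x) = 2nx²/(x+1) is forward invariant for the slow flow d[S]/dτ = 1 − [S], d[SS]/dτ = 2(n[S] − [SS]): on the boundary curve [SS] = α([S]), the inner product of the outward normal ν = (−α'([S]), 1) with the vector field equals 2(n(2[S]³+3[S]²−[S])/([S]+1)² − [SS]), which is strictly less than 2(α([S]) − [SS]) = 0 there. -/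
/-!
With `E = e^{-τ}` both equations integrate explicitly: `[S] = 1 - (1 - [S]₀) E` and
`[SS] - n[S]² = ([SS]₀ - n[S]₀²) E²`, and uniqueness for linear ODEs identifies every solution
with this flow. Membership in `D` then becomes polynomial inequalities in `E ∈ (0, 1]`; the
essential one, `[SS] < α([S])`, holds because `[S] ≥ [S]₀` along the flow and `x²/(x+1)` is
increasing, so the deficit `[SS]₀ - n[S]₀² < α([S]₀) - n[S]₀²` is never overtaken.
-/

open Set Real

noncomputable section

def alpha (n x : ℝ) : ℝ := 2 * n * x ^ 2 / (x + 1)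

def region (n : ℝ) : Set (ℝ × ℝ) :=
  {p | p.1 ∈ Ioo 0 1 ∧ p.2 ∈ Ioo 0 n ∧ p.2 < alpha n p.1}

def slowFlow (n t : ℝ) (p : ℝ × ℝ) : ℝ × ℝ :=
  (1 - (1 - p.1) * exp (-t),
    n * (1 - (1 - p.1) * exp (-t)) ^ 2 + (p.2 - n * p.1 ^ 2) * exp (-t) ^ 2)

theorem eq_of_hasDerivAt_linear {c : ℝ} {r f g : ℝ → ℝ}
    (hf : ∀ τ ≥ 0, HasDerivAt f (r τ - c * f τ) τ)
    (hg : ∀ τ ≥ 0, HasDerivAt g (r τ - c * g τ) τ) (h0 : f 0 = g 0) :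
    ∀ t ≥ 0, f t = g t := by
  intro t ht
  set d : ℝ → ℝ := fun τ => exp (c * τ) * (f τ - g τ)
  have hd : ∀ τ ≥ 0, HasDerivAt d 0 τ := fun τ hτ => by
    have := (((hasDerivAt_id τ).const_mul c).exp).mul ((hf τ hτ).sub (hg τ hτ))
    exact this.congr_deriv (by simp only [Pi.sub_apply]; ring)
  have hconst := constant_of_has_deriv_right_zero
    (fun τ hτ => (hd τ hτ.1).continuousAt.continuousWithinAt)
    (fun τ hτ => (hd τ hτ.1).hasDerivWithinAt) t ⟨ht, le_rfl⟩
  simpa [d, h0, sub_eq_zero, exp_ne_zero] using hconst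

theorem hasDerivAt_slowFlow_fst (n t : ℝ) (p : ℝ × ℝ) :
    HasDerivAt (fun t => (slowFlow n t p).1) (1 - (slowFlow n t p).1) t := by
  have := ((hasDerivAt_neg t).exp.const_mul (1 - p.1)).const_sub 1
  exact this.congr_deriv (by simp [slowFlow])

theorem hasDerivAt_slowFlow_snd (n t : ℝ) (p : ℝ × ℝ) :
    HasDerivAt (fun t => (slowFlow n t p).2)
      (2 * (n * (slowFlow n t p).1 - (slowFlow n t p).2)) t := by
  have := (((hasDerivAt_slowFlow_fst n t p).pow 2).const_mul n).add
    (((hasDerivAt_neg t).exp.pow 2).const_mul (p.2 - n * p.1 ^ 2))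
  exact this.congr_deriv (by simp only [slowFlow]; ring)

theorem eq_slowFlow_of_hasDerivAt {n : ℝ} {S SS : ℝ → ℝ}
    (hS : ∀ τ ≥ 0, HasDerivAt S (1 - S τ) τ)
    (hSS : ∀ τ ≥ 0, HasDerivAt SS (2 * (n * S τ - SS τ)) τ) :
    ∀ t ≥ 0, (S t, SS t) = slowFlow n t (S 0, SS 0) := by
  set p := (S 0, SS 0)
  have hS_eq : ∀ t ≥ 0, S t = (slowFlow n t p).1 :=
    eq_of_hasDerivAt_linear (r := fun _ => 1) (c := 1)
      (fun τ hτ => (hS τ hτ).congr_deriv (by ring))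
      (fun τ _ => (hasDerivAt_slowFlow_fst n τ p).congr_deriv (by ring))
      (by simp [slowFlow, p])
  have hSS_eq : ∀ t ≥ 0, SS t = (slowFlow n t p).2 :=
    eq_of_hasDerivAt_linear (r := fun τ => 2 * n * S τ) (c := 2)
      (fun τ hτ => (hSS τ hτ).congr_deriv (by ring))
      (fun τ hτ => (hasDerivAt_slowFlow_snd n τ p).congr_deriv (by rw [← hS_eq τ hτ]; ring))
      (by simp [slowFlow, p])
  exact fun t ht => Prod.ext (hS_eq t ht) (hSS_eq t ht)

theorem mem_region_of_decay {n a b s E : ℝ} (hp : (a, b) ∈ region n) (hE0 : 0 < E)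
    (hE1 : E ≤ 1) (hs : 1 - s = (1 - a) * E) :
    (s, n * s ^ 2 + (b - n * a ^ 2) * E ^ 2) ∈ region n := by
  simp only [region, alpha, mem_ofPred_eq, mem_Ioo] at hp ⊢
  obtain ⟨⟨ha0, ha1⟩, ⟨hb0, hbn⟩, hba⟩ := hp
  rw [lt_div_iff₀ (by linarith)] at hba
  have hn : 0 < n := hb0.trans hbn
  have has : a ≤ s := by nlinarith
  have hs1 : s < 1 := by nlinarith
  have haE : a * E ≤ s := by nlinarith
  refine ⟨⟨by linarith, hs1⟩, ⟨?_, ?_⟩, (lt_div_iff₀ (by linarith)).2 ?_⟩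
  · nlinarith [mul_nonneg (mul_nonneg hn.le (sub_nonneg.2 haE)) (by nlinarith : 0 ≤ s + a * E),
      mul_pos hb0 (pow_pos hE0 2)]
  · have : (1 - a ^ 2) * E ^ 2 ≤ 1 - s ^ 2 := by
      nlinarith [mul_nonneg (mul_nonneg (sub_nonneg.2 ha1.le) hE0.le) (sub_nonneg.2 hE1)]
    nlinarith [mul_pos (sub_pos.2 hbn) (pow_pos hE0 2)]
  · have hK : (b - n * a ^ 2) * (a + 1) < n * a ^ 2 * (1 - a) := by linarith
    have hmono : a ^ 2 * E * (s + 1) ≤ s ^ 2 * (a + 1) := by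
      nlinarith [mul_nonneg (mul_nonneg (sq_nonneg a) (sub_nonneg.2 hE1)) (by linarith : 0 ≤ s + 1),
        mul_nonneg (sub_nonneg.2 has) (by nlinarith : 0 ≤ a * s + a + s)]
    have hmain : (b - n * a ^ 2) * E * (s + 1) < n * (1 - a) * s ^ 2 := by
      refine lt_of_mul_lt_mul_right ?_ (by linarith : 0 ≤ a + 1)
      nlinarith [mul_lt_mul_of_pos_right hK (mul_pos hE0 (by linarith) : 0 < E * (s + 1)),
        mul_le_mul_of_nonneg_left hmono (by nlinarith : 0 ≤ n * (1 - a))]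
    have h1s : n * s ^ 2 * (1 - s) = n * s ^ 2 * ((1 - a) * E) := by rw [hs]
    nlinarith [mul_lt_mul_of_pos_left hmain hE0]

theorem slowFlow_mem_region {n t : ℝ} {p : ℝ × ℝ} (hp : p ∈ region n) (ht : 0 ≤ t) :
    slowFlow n t p ∈ region n :=
  mem_region_of_decay hp (exp_pos _) (exp_le_one_iff.2 (by linarith)) (by ring)

theorem normal_inner_slowField_eq {n s : ℝ} (ss : ℝ) (hs : s + 1 ≠ 0) :
    (-(2 * n * s * (s + 2) / (s + 1) ^ 2)) * (1 - s) + 1 * (2 * (n * s - ss))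
      = 2 * (n * (2 * s ^ 3 + 3 * s ^ 2 - s) / (s + 1) ^ 2 - ss) := by
  field_simp
  ring

theorem normal_inner_slowField_lt_alpha {n s : ℝ} (hn : 0 < n) (hs : s ∈ Ioo 0 1) :
    n * (2 * s ^ 3 + 3 * s ^ 2 - s) / (s + 1) ^ 2 < alpha n s := by
  obtain ⟨hs0, hs1⟩ := hs
  have hsplit : n * (2 * s ^ 3 + 3 * s ^ 2 - s) / (s + 1) ^ 2
      = alpha n s - n * s * (1 - s) / (s + 1) ^ 2 := by
    unfold alpha
    field_simp
    ring
  have : 0 < 1 - s := by linarith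
  have : 0 < n * s * (1 - s) / (s + 1) ^ 2 := by positivity
  linarith

/-- The region below the curve α([S]) = 2n[S]²/([S]+1) is forward invariant for the slow
flow: the outward normal inner product on the boundary is negative, and solutions starting
in the region stay in it. -/
theorem region_below_alpha_forward_invariant (n : ℝ) (hn : 2 < n) :
    (∀ s : ℝ, s ∈ Set.Ioo (0:ℝ) 1 → ∀ ss : ℝ, ss = 2 * n * s ^ 2 / (s + 1) →
      (-(2 * n * s * (s + 2) / (s + 1) ^ 2)) * (1 - s) + 1 * (2 * (n * s - ss))
          = 2 * (n * (2 * s ^ 3 + 3 * s ^ 2 - s) / (s + 1) ^ 2 - ss) ∧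
        2 * (n * (2 * s ^ 3 + 3 * s ^ 2 - s) / (s + 1) ^ 2 - ss)
          < 2 * (2 * n * s ^ 2 / (s + 1) - ss)) ∧
    (∀ S SS : ℝ → ℝ,
      (∀ τ ≥ (0:ℝ), HasDerivAt S (1 - S τ) τ) →
      (∀ τ ≥ (0:ℝ), HasDerivAt SS (2 * (n * S τ - SS τ)) τ) →
      S 0 ∈ Set.Ioo (0:ℝ) 1 → SS 0 ∈ Set.Ioo (0:ℝ) n →
      SS 0 < 2 * n * (S 0) ^ 2 / (S 0 + 1) →
      ∀ τ ≥ (0:ℝ), S τ ∈ Set.Ioo (0:ℝ) 1 ∧ SS τ ∈ Set.Ioo (0:ℝ) n ∧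
        SS τ < 2 * n * (S τ) ^ 2 / (S τ + 1)) := by
  refine ⟨fun s hs ss _ => ⟨normal_inner_slowField_eq ss (by linarith [hs.1] : 0 < s + 1).ne', ?_⟩,
    fun S SS hS hSS hS0 hSS0 h0 τ hτ => ?_⟩
  · have := normal_inner_slowField_lt_alpha (by linarith : 0 < n) hs
    unfold alpha at this
    linarith
  · have := slowFlow_mem_region (p := (S 0, SS 0)) ⟨hS0, hSS0, h0⟩ hτ
    rwa [← eq_slowFlow_of_hasDerivAt hS hSS τ hτ] at this
end
end

section
/- Let β, γ > 0, n > 2 with (n−2)β > γ, and let λ₅(τ) denote −(γ+β) + β((n−1)/n)·[SS](τ)/[S](τ) along the explicit slow-flow solution with initial data ([S]∞,[SS]∞) ∈ (0,1)×(0,n) satisfying [SS]∞ < L[S]∞ (attracting region, so λ₅(0) < 0). Then ∫₀^T λ₅(σ) dσ → +∞ as T → +∞, and consequently there exists a finite T_E > 0 with ∫₀^{T_E} λ₅(σ) dσ = 0. -/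
/-!
Since `[S] → 1` and `[SS] → n`, the rate `λ₅` tends to `β (n - 2) - γ > 0`, so its integral grows
at least linearly and diverges. At `τ = 0` the attracting condition `[SS]∞ < L [S]∞` is exactly
`λ₅ 0 < 0`, so the integral is negative just after `0`; by the intermediate value theorem it
vanishes again at some later time `T_E`.
-/

open Real Filter Topology Set intervalIntegral

section Primitive

variable {f : ℝ → ℝ} {a : ℝ}

theorem ContinuousOn.intervalIntegrable_of_Ici (hf : ContinuousOn f (Ici a)) {b c : ℝ}
    (hb : a ≤ b) (hc : a ≤ c) : IntervalIntegrable f MeasureTheory.volume b c :=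
  (hf.mono fun _ hx => (le_min hb hc).trans hx.1).intervalIntegrable

theorem tendsto_intervalIntegral_atTop_of_eventually_ge (hf : ContinuousOn f (Ici a))
    {c : ℝ} (hc : 0 < c) (hfc : ∀ᶠ x in atTop, c ≤ f x) :
    Tendsto (fun T => ∫ x in a..T, f x) atTop atTop := by
  obtain ⟨T₀, hT₀⟩ := eventually_atTop.mp (hfc.and (eventually_ge_atTop a))
  have haT₀ : a ≤ T₀ := (hT₀ T₀ le_rfl).2
  have hlow : ∀ T ≥ T₀, (∫ x in a..T₀, f x) + (T - T₀) * c ≤ ∫ x in a..T, f x := by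
    intro T hT
    have hint := hf.intervalIntegrable_of_Ici haT₀ (haT₀.trans hT)
    rw [← integral_add_adjacent_intervals (hf.intervalIntegrable_of_Ici le_rfl haT₀) hint]
    have hmono := integral_mono_on hT intervalIntegrable_const hint fun x hx => (hT₀ x hx.1).1
    rw [integral_const, smul_eq_mul] at hmono
    linarith
  refine tendsto_atTop_mono' _ (eventually_atTop.mpr ⟨T₀, hlow⟩) ?_
  exact tendsto_atTop_add_const_left _ _
    ((tendsto_atTop_add_const_right _ _ tendsto_id).atTop_mul_const hc)

theorem exists_intervalIntegral_neg_of_neg (hf : ContinuousOn f (Ici a)) (ha : f a < 0) :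
    ∃ b > a, ∫ x in a..b, f x < 0 := by
  obtain ⟨b, hab, hb⟩ := mem_nhdsGE_iff_exists_Ico_subset.mp
    ((hf a self_mem_Ici).eventually (gt_mem_nhds ha))
  refine ⟨b, hab, ?_⟩
  have hpos := intervalIntegral_pos_of_pos_on (hf.intervalIntegrable_of_Ici le_rfl hab.le).neg
    (fun x hx => neg_pos.mpr (hb (Ioo_subset_Ico_self hx))) hab
  simpa only [Pi.neg_apply, integral_neg, neg_pos] using hpos

theorem exists_intervalIntegral_eq_zero_of_neg_of_tendsto (hf : ContinuousOn f (Ici a))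
    (ha : f a < 0) (htop : Tendsto (fun T => ∫ x in a..T, f x) atTop atTop) :
    ∃ T > a, ∫ x in a..T, f x = 0 := by
  obtain ⟨b, hab, hb⟩ := exists_intervalIntegral_neg_of_neg hf ha
  obtain ⟨T, hT, hbT⟩ := ((htop.eventually_gt_atTop 0).and (eventually_ge_atTop b)).exists
  have hcont : ContinuousOn (fun x => ∫ t in a..x, f t) (Icc b T) := by
    have haT : a ≤ T := hab.le.trans hbT
    refine (continuousOn_primitive_interval' (b₁ := a) (b₂ := T) ?_ left_mem_uIcc).mono ?_
    · exact hf.intervalIntegrable_of_Ici le_rfl haT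
    · rw [uIcc_of_le haT]
      exact Icc_subset_Icc hab.le le_rfl
  obtain ⟨TE, hTE, hzero⟩ := intermediate_value_Icc hbT hcont ⟨hb.le, hT.le⟩
  exact ⟨TE, hab.trans_le hTE.1, hzero⟩

end Primitive

noncomputable section SlowFlow

-- `[S](τ)`, `[SS](τ)` started at `([S]∞, [SS]∞) = (Sinf, SSinf)`, and the rate `λ₅(τ)` along them.

def slowS (Sinf τ : ℝ) : ℝ := (Sinf - 1) * exp (-τ) + 1

def slowSS (n Sinf SSinf τ : ℝ) : ℝ :=
  2 * (Sinf - 1) * n * exp (-2 * τ) * (exp τ - 1) + (SSinf - n) * exp (-2 * τ) + n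

def lambda5 (β γ n Sinf SSinf τ : ℝ) : ℝ :=
  -(γ + β) + β * ((n - 1) / n) * (slowSS n Sinf SSinf τ / slowS Sinf τ)

variable {β γ n Sinf SSinf : ℝ}

theorem slowS_pos (hS : 0 < Sinf) {τ : ℝ} (hτ : 0 ≤ τ) : 0 < slowS Sinf τ := by
  have hle : exp (-τ) ≤ 1 := exp_le_one_iff.mpr (neg_nonpos.mpr hτ)
  have hpos := mul_pos hS (exp_pos (-τ))
  unfold slowS
  nlinarith

theorem slowSS_eq_poly_exp_neg (τ : ℝ) :
    slowSS n Sinf SSinf τ =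
      2 * (Sinf - 1) * n * (exp (-τ) - exp (-τ) ^ 2) + (SSinf - n) * exp (-τ) ^ 2 + n := by
  have hsq : exp (-2 * τ) = exp (-τ) ^ 2 := by rw [← exp_nat_mul]; ring_nf
  have hmul : exp (-τ) ^ 2 * exp τ = exp (-τ) := by
    rw [sq, mul_assoc, ← exp_add]; simp
  rw [slowSS, hsq]
  linear_combination (2 * (Sinf - 1) * n) * hmul

theorem tendsto_slowS : Tendsto (slowS Sinf) atTop (𝓝 1) := by
  have hcont : Continuous fun x : ℝ => (Sinf - 1) * x + 1 := by fun_prop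
  exact (hcont.tendsto' 0 1 (by simp)).comp tendsto_exp_neg_atTop_nhds_zero

theorem tendsto_slowSS : Tendsto (slowSS n Sinf SSinf) atTop (𝓝 n) := by
  have hcont : Continuous fun x : ℝ => 2 * (Sinf - 1) * n * (x - x ^ 2) + (SSinf - n) * x ^ 2 + n :=
    by fun_prop
  rw [show slowSS n Sinf SSinf = (fun x : ℝ =>
      2 * (Sinf - 1) * n * (x - x ^ 2) + (SSinf - n) * x ^ 2 + n) ∘ fun τ => exp (-τ) from
    funext slowSS_eq_poly_exp_neg]
  exact (hcont.tendsto' 0 n (by simp)).comp tendsto_exp_neg_atTop_nhds_zero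

theorem tendsto_lambda5 (hn : n ≠ 0) :
    Tendsto (lambda5 β γ n Sinf SSinf) atTop (𝓝 (β * (n - 2) - γ)) := by
  have hratio := (tendsto_slowSS (n := n) (Sinf := Sinf) (SSinf := SSinf)).div
    (tendsto_slowS (Sinf := Sinf)) one_ne_zero
  have hlim := (hratio.const_mul (β * ((n - 1) / n))).const_add (-(γ + β))
  rwa [show -(γ + β) + β * ((n - 1) / n) * (n / 1) = β * (n - 2) - γ by field_simp; ring] at hlim

theorem continuousOn_lambda5 (hS : 0 < Sinf) :
    ContinuousOn (lambda5 β γ n Sinf SSinf) (Ici 0) := by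
  have hcS : Continuous (slowS Sinf) := by unfold slowS; fun_prop
  have hcSS : Continuous (slowSS n Sinf SSinf) := by unfold slowSS; fun_prop
  exact continuousOn_const.add (continuousOn_const.mul
    (hcSS.continuousOn.div hcS.continuousOn fun τ hτ => (slowS_pos hS hτ).ne'))

theorem lambda5_zero_neg (hβ : 0 < β) (hn : 1 < n) (hS : 0 < Sinf)
    (hattr : SSinf < (n * (β + γ) / (β * (n - 1))) * Sinf) :
    lambda5 β γ n Sinf SSinf 0 < 0 := by
  have hβn : 0 < β * (n - 1) := mul_pos hβ (sub_pos.mpr hn)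
  rw [div_mul_eq_mul_div, lt_div_iff₀ hβn] at hattr
  have hrate : β * ((n - 1) / n) * (SSinf / Sinf) < γ + β := by
    rw [show β * ((n - 1) / n) * (SSinf / Sinf) = β * (n - 1) * SSinf / (n * Sinf) by
      field_simp, div_lt_iff₀ (by positivity)]
    linarith
  have hzero : lambda5 β γ n Sinf SSinf 0 = -(γ + β) + β * ((n - 1) / n) * (SSinf / Sinf) := by
    simp [lambda5, slowS, slowSS]
  linarith

end SlowFlow

theorem exit_time_finite_general (β γ n Sinf SSinf : ℝ)
    (hβ : 0 < β) (hn : 2 < n) (hR0 : γ < (n - 2) * β)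
    (hSinf : Sinf ∈ Set.Ioo (0:ℝ) 1)
    (hattr : SSinf < (n * (β + γ) / (β * (n - 1))) * Sinf) :
    let S : ℝ → ℝ := fun τ => (Sinf - 1) * exp (-τ) + 1
    let SS : ℝ → ℝ := fun τ =>
      2 * (Sinf - 1) * n * exp (-2 * τ) * (exp τ - 1) + (SSinf - n) * exp (-2 * τ) + n
    let lam5 : ℝ → ℝ := fun τ => -(γ + β) + β * ((n - 1) / n) * (SS τ / S τ)
    Tendsto (fun T => ∫ σ in (0:ℝ)..T, lam5 σ) atTop atTop ∧
    ∃ TE : ℝ, 0 < TE ∧ (∫ σ in (0:ℝ)..TE, lam5 σ) = 0 := by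
  intro S SS lam5
  have hcont : ContinuousOn (lambda5 β γ n Sinf SSinf) (Ici 0) := continuousOn_lambda5 hSinf.1
  have hlim_pos : 0 < β * (n - 2) - γ := by linarith
  have hdiv := tendsto_intervalIntegral_atTop_of_eventually_ge hcont (half_pos hlim_pos)
    ((tendsto_lambda5 (by positivity)).eventually (eventually_ge_nhds (half_lt_self hlim_pos)))
  exact ⟨hdiv, exists_intervalIntegral_eq_zero_of_neg_of_tendsto hcont
    (lambda5_zero_neg hβ (by linarith) hSinf.1 hattr) hdiv⟩

/-- Divergence of the accumulated exponential rate and existence of a finite exit time for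
the entry–exit mechanism along the explicit slow-flow solution. -/
theorem exit_time_finite (β γ n Sinf SSinf : ℝ)
    (hβ : 0 < β) (hγ : 0 < γ) (hn : 2 < n) (hR0 : γ < (n - 2) * β)
    (hSinf : Sinf ∈ Set.Ioo (0:ℝ) 1) (hSSinf : SSinf ∈ Set.Ioo (0:ℝ) n)
    (hattr : SSinf < (n * (β + γ) / (β * (n - 1))) * Sinf) :
    let S : ℝ → ℝ := fun τ => (Sinf - 1) * exp (-τ) + 1
    let SS : ℝ → ℝ := fun τ =>
      2 * (Sinf - 1) * n * exp (-2 * τ) * (exp τ - 1) + (SSinf - n) * exp (-2 * τ) + n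
    let lam5 : ℝ → ℝ := fun τ => -(γ + β) + β * ((n - 1) / n) * (SS τ / S τ)
    Tendsto (fun T => ∫ σ in (0:ℝ)..T, lam5 σ) atTop atTop ∧
    ∃ TE : ℝ, 0 < TE ∧ (∫ σ in (0:ℝ)..TE, lam5 σ) = 0 :=
  exit_time_finite_general β γ n Sinf SSinf hβ hn hR0 hSinf hattr
end
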